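/- arXiv:2109.08313 — 3 statements merged into one kernel-verified Lean document; each statement's English description precedes it below -/
import Mathlib

section
/- Locality: if two assignments s, t in the team of a dependence model agree on a set of variables X containing all free variables of an LFD formula φ, then s satisfies φ iff t satisfies φ. -/
/-- LFD formulas over predicate symbols `Sig` and variables `V`. -/
inductive Formula (Sig V : Type) where
  | atom : Sig → List V → Formula Sig V
  | neg : Formula Sig V → Formula Sig V
  | and : Formula Sig V → Formula Sig V → Formula Sig V
  | dmod : Set V → Formula Sig V → Formula Sig V
  | dep : Set V → V → Formula Sig V

/-- `agree s t X` : the assignments `s` and `t` agree on all variables in `X` (`s =_X t`). -/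
def agree {V O : Type} (s t : V → O) (X : Set V) : Prop := ∀ x ∈ X, s x = t x

/-- LFD semantics on a dependence model given by interpretation `I` and team `A`. -/
def satisfies {Sig V O : Type} (I : Sig → List O → Prop) (A : Set (V → O)) :
    (V → O) → Formula Sig V → Prop
  | s, .atom p xs => I p (xs.map s)
  | s, .neg φ => ¬ satisfies I A s φ
  | s, .and φ ψ => satisfies I A s φ ∧ satisfies I A s ψ
  | s, .dmod X φ => ∀ t ∈ A, agree s t X → satisfies I A t φ
  | s, .dep X y => ∀ t ∈ A, agree s t X → s y = t y

/-- Free variables of an LFD formula. -/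
def free {Sig V : Type} : Formula Sig V → Set V
  | .atom _ xs => {x | x ∈ xs}
  | .neg φ => free φ
  | .and φ ψ => free φ ∪ free ψ
  | .dmod X _ => X
  | .dep X _ => X

/-- Locality: if s, t ∈ A agree on a set X ⊇ Free(φ), then s ⊨ φ iff t ⊨ φ. -/
theorem locality {Sig V O : Type} (I : Sig → List O → Prop) (A : Set (V → O))
    (s t : V → O) (hs : s ∈ A) (ht : t ∈ A) (X : Set V) (φ : Formula Sig V)
    (hagree : agree s t X) (hfree : free φ ⊆ X) :
    satisfies I A s φ ↔ satisfies I A t φ := by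
  induction φ with
  | atom p xs =>
    have : xs.map s = xs.map t := by
      apply List.map_congr_left
      intro x hx
      exact hagree x (hfree hx)
    simp [satisfies, this]
  | neg φ ih => simp [satisfies, ih hfree]
  | and φ ψ ih1 ih2 =>
    simp [satisfies, ih1 (fun x hx => hfree (Or.inl hx)),
      ih2 (fun x hx => hfree (Or.inr hx))]
  | dmod Y φ ih =>
    have key : ∀ u, agree s u Y ↔ agree t u Y := fun u =>
      ⟨fun h x hx => (hagree x (hfree hx)).symm.trans (h x hx),
       fun h x hx => (hagree x (hfree hx)).trans (h x hx)⟩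
    constructor <;> intro h u hu hau
    · exact h u hu ((key u).mpr hau)
    · exact h u hu ((key u).mp hau)
  | dep Y y =>
    have key : ∀ u, agree s u Y ↔ agree t u Y := fun u =>
      ⟨fun h x hx => (hagree x (hfree hx)).symm.trans (h x hx),
       fun h x hx => (hagree x (hfree hx)).trans (h x hx)⟩
    constructor <;> intro h u hu hau
    · have h1 := h u hu ((key u).mpr hau)
      have h2 := h t ht ((key t).mpr (fun x hx => rfl))
      exact h2.symm.trans h1
    · have h1 := h u hu ((key u).mp hau)
      have h2 := h s hs ((key s).mp (fun x hx => rfl))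
      exact h2.symm.trans h1
end

section
/- LFD formulas are invariant under dependence bisimulations: if Z is a dependence bisimulation between dependence models 𝕄 and 𝕄' and (s,s') ∈ Z, then for every LFD formula φ, 𝕄, s ⊨ φ iff 𝕄', s' ⊨ φ. -/
/-- X is dependence-closed at s: s ⊨ D_X y implies y ∈ X. -/
def depClosed {Sig V O : Type} (I : Sig → List O → Prop) (A : Set (V → O))
    (s : V → O) (X : Set V) : Prop :=
  ∀ y : V, satisfies I A s (Formula.dep X y) → y ∈ X

/-- Dependence bisimulation between dependence models (I, A) and (I', A'). -/
def IsDepBisim {Sig V O O' : Type} (I : Sig → List O → Prop) (A : Set (V → O))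
    (I' : Sig → List O' → Prop) (A' : Set (V → O'))
    (Z : Set ((V → O) × (V → O'))) : Prop :=
  Z.Nonempty ∧ (∀ p ∈ Z, p.1 ∈ A ∧ p.2 ∈ A') ∧
  ∀ p ∈ Z,
    (∀ (P : Sig) (xs : List V),
      satisfies I A p.1 (Formula.atom P xs) ↔ satisfies I' A' p.2 (Formula.atom P xs)) ∧
    (∀ t ∈ A, depClosed I' A' p.2 {v | p.1 v = t v} ∧
      ∃ t' ∈ A', agree p.2 t' {v | p.1 v = t v} ∧ (t, t') ∈ Z) ∧
    (∀ t' ∈ A', depClosed I A p.1 {v | p.2 v = t' v} ∧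
      ∃ t ∈ A, agree p.1 t {v | p.2 v = t' v} ∧ (t, t') ∈ Z)

/-- LFD formulas are invariant under dependence bisimulations. -/
theorem lfd_invariance_depBisim {Sig V O O' : Type}
    (I : Sig → List O → Prop) (A : Set (V → O))
    (I' : Sig → List O' → Prop) (A' : Set (V → O'))
    (Z : Set ((V → O) × (V → O'))) (hZ : IsDepBisim I A I' A' Z)
    (s : V → O) (s' : V → O') (hss' : (s, s') ∈ Z) :
    ∀ φ : Formula Sig V, satisfies I A s φ ↔ satisfies I' A' s' φ := by
  obtain ⟨-, -, hmain⟩ := hZ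
  suffices h : ∀ φ : Formula Sig V, ∀ q ∈ Z,
      satisfies I A q.1 φ ↔ satisfies I' A' q.2 φ from fun φ => h φ (s, s') hss'
  intro φ
  induction φ with
  | atom P xs =>
    intro q hq
    exact (hmain q hq).1 P xs
  | neg φ ih =>
    intro q hq
    simp only [satisfies, ih q hq]
  | and φ ψ ihφ ihψ =>
    intro q hq
    simp only [satisfies, ihφ q hq, ihψ q hq]
  | dmod X φ ih =>
    intro q hq
    constructor
    · intro h t' ht' hag
      obtain ⟨-, t, htA, hagt, htZ⟩ := (hmain q hq).2.2 t' ht'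
      exact (ih (t, t') htZ).1 (h t htA (fun x hx => hagt x (hag x hx)))
    · intro h t ht hag
      obtain ⟨-, t', ht'A, hagt, htZ⟩ := (hmain q hq).2.1 t ht
      exact (ih (t, t') htZ).2 (h t' ht'A (fun x hx => hagt x (hag x hx)))
  | dep X y =>
    intro q hq
    constructor
    · intro h t' ht' hag
      obtain ⟨hdc, -⟩ := (hmain q hq).2.2 t' ht'
      exact hdc y (fun u huA hagu => h u huA (fun x hx => hagu x (hag x hx)))
    · intro h t ht hag
      obtain ⟨hdc, -⟩ := (hmain q hq).2.1 t ht
      exact hdc y (fun u huA hagu => h u huA (fun x hx => hagu x (hag x hx)))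
end

section
/- The two notions of bisimulation for LFD coincide: a nonempty relation Z between teams of dependence models is a dependence bisimulation (using the dependence-closed condition in Forth/Back) if and only if it is an LFD-bisimulation in which the Atom clause additionally requires s ⊨ D_X y iff s' ⊨ D_X y for all X ∪ {y} ⊆ V, and the Forth/Back clauses drop the dependence-closedness requirement. -/
/-- LFD-bisimulation à la [local_deps]: Atom clause also covers dependence atoms,
Forth/Back drop the dependence-closedness requirement. -/
def IsLFDBisim {Sig V O O' : Type} (I : Sig → List O → Prop) (A : Set (V → O))
    (I' : Sig → List O' → Prop) (A' : Set (V → O'))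
    (Z : Set ((V → O) × (V → O'))) : Prop :=
  Z.Nonempty ∧ (∀ p ∈ Z, p.1 ∈ A ∧ p.2 ∈ A') ∧
  ∀ p ∈ Z,
    (∀ (P : Sig) (xs : List V),
      satisfies I A p.1 (Formula.atom P xs) ↔ satisfies I' A' p.2 (Formula.atom P xs)) ∧
    (∀ (X : Set V) (y : V),
      satisfies I A p.1 (Formula.dep X y) ↔ satisfies I' A' p.2 (Formula.dep X y)) ∧
    (∀ t ∈ A, ∃ t' ∈ A', agree p.2 t' {v | p.1 v = t v} ∧ (t, t') ∈ Z) ∧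
    (∀ t' ∈ A', ∃ t ∈ A, agree p.1 t {v | p.2 v = t' v} ∧ (t, t') ∈ Z)

/-- The two notions of bisimulation for LFD coincide. -/
theorem depBisim_iff_lfdBisim {Sig V O O' : Type}
    (I : Sig → List O → Prop) (A : Set (V → O))
    (I' : Sig → List O' → Prop) (A' : Set (V → O'))
    (Z : Set ((V → O) × (V → O'))) :
    IsDepBisim I A I' A' Z ↔ IsLFDBisim I A I' A' Z := by
  constructor
  · rintro ⟨hne, hmem, hcl⟩
    refine ⟨hne, hmem, fun p hp => ?_⟩
    obtain ⟨hatom, hforth, hback⟩ := hcl p hp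
    refine ⟨hatom, ?_, fun t ht => (hforth t ht).2, fun t' ht' => (hback t' ht').2⟩
    intro X y
    constructor
    · intro hs t' ht' hag'
      obtain ⟨hdc, _⟩ := hback t' ht'
      exact hdc y (fun u hu hagu => hs u hu (fun x hx => hagu x (hag' x hx)))
    · intro hs' t ht hag
      obtain ⟨hdc, _⟩ := hforth t ht
      exact hdc y (fun u hu hagu => hs' u hu (fun x hx => hagu x (hag x hx)))
  · rintro ⟨hne, hmem, hcl⟩
    refine ⟨hne, hmem, fun p hp => ?_⟩
    obtain ⟨hatom, hdep, hforth, hback⟩ := hcl p hp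
    refine ⟨hatom, fun t ht => ⟨?_, hforth t ht⟩, fun t' ht' => ⟨?_, hback t' ht'⟩⟩
    · intro y hy
      have hs : satisfies I A p.1 (Formula.dep {v | p.1 v = t v} y) :=
        (hdep {v | p.1 v = t v} y).mpr hy
      exact hs t ht (fun x hx => hx)
    · intro y hy
      have hs' : satisfies I' A' p.2 (Formula.dep {v | p.2 v = t' v} y) :=
        (hdep {v | p.2 v = t' v} y).mp hy
      exact hs' t' ht' (fun x hx => hx)
end
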